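/- Multiplicativity of the maximum entanglement fidelity: let N₁ : M_{d₁}(ℂ) → M_{d₁}(ℂ) be a channel with Kraus operators {J_q} and N₂ : M_{d₂}(ℂ) → M_{d₂}(ℂ) a channel with Kraus operators {K_r}, and let N₁⊗N₂ : M_{d₁d₂}(ℂ) → M_{d₁d₂}(ℂ) be the channel with Kraus operators {J_q ⊗ K_r} (Kronecker products, identifying ℂ^{d₁d₂} with ℂ^{d₁}⊗ℂ^{d₂}). Then O(N₁⊗N₂) = O(N₁)·O(N₂), where O denotes the maximum entanglement fidelity of each channel on its respective dimension. -/

import Mathlib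

open Matrix
open scoped Kronecker ComplexOrder

/-- The maximally entangled unit vector `φ = (1/√d) Σ_a e_a ⊗ e_a`. -/
noncomputable def maxEnt (n : Type*) [Fintype n] [DecidableEq n] : n × n → ℂ :=
  fun p => if p.1 = p.2 then ((1 / Real.sqrt (Fintype.card n) : ℝ) : ℂ) else 0

/-- The output `(id ⊗ N)(ρ) = Σ_i (I ⊗ K_i) ρ (I ⊗ K_i)†` of one half of `ρ`
through the channel with Kraus operators `K`. -/
noncomputable def chanOut {n : Type*} [Fintype n] [DecidableEq n] {ι : Type*} [Fintype ι]
    (K : ι → Matrix n n ℂ) (ρ : Matrix (n × n) (n × n) ℂ) : Matrix (n × n) (n × n) ℂ :=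
  ∑ i, ((1 : Matrix n n ℂ) ⊗ₖ K i) * ρ * ((1 : Matrix n n ℂ) ⊗ₖ K i)ᴴ

/-- The entanglement fidelity `⟨φ, ((id⊗N)(ρ)) φ⟩`. -/
noncomputable def fid {n : Type*} [Fintype n] [DecidableEq n] {ι : Type*} [Fintype ι]
    (K : ι → Matrix n n ℂ) (ρ : Matrix (n × n) (n × n) ℂ) : ℂ :=
  star (maxEnt n) ⬝ᵥ (chanOut K ρ *ᵥ maxEnt n)

/-- A density matrix: positive semidefinite with unit trace. -/
def IsDensity {m : Type*} [Fintype m] (ρ : Matrix m m ℂ) : Prop :=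
  ρ.PosSemidef ∧ ρ.trace = 1

/-- The set of (real) entanglement fidelity values achievable with density-matrix inputs;
its supremum is the maximum entanglement fidelity `O(N)`. -/
noncomputable def fidSet {n : Type*} [Fintype n] [DecidableEq n] {ι : Type*} [Fintype ι]
    (K : ι → Matrix n n ℂ) : Set ℝ :=
  {x : ℝ | ∃ ρ : Matrix (n × n) (n × n) ℂ, IsDensity ρ ∧ fid K ρ = (x : ℂ)}

/-! The fidelity is linear in the state: `fid K ρ = Tr(ρ F_K)` for the positive matrix
`F_K = Σ_i (1 ⊗ K_i)† |φ⟩⟨φ| (1 ⊗ K_i)`, so `O(N)` is the supremum `λ(F_K)` of `Tr(ρ F_K)` over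
states, i.e. the largest eigenvalue of `F_K`. Up to reordering the four tensor factors, `F` of the
product channel is `F_J ⊗ F_K`, so it remains to show `λ(A ⊗ B) = λ(A) λ(B)` for positive `A`, `B`.
Product states give `≥`. For `≤`, `λ(A) • 1 - A` and `λ(B) • 1 - B` are positive, hence so is
`λ(A) λ(B) • 1 - A ⊗ B = (λ(A) • 1 - A) ⊗ B + λ(A) • 1 ⊗ (λ(B) • 1 - B)`. -/

lemma Real.sSup_mul_sSup_le {s t : Set ℝ} {c : ℝ} (hs : ∀ x ∈ s, 0 ≤ x) (ht : ∀ y ∈ t, 0 ≤ y)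
    (hc : 0 ≤ c) (h : ∀ x ∈ s, ∀ y ∈ t, x * y ≤ c) : sSup s * sSup t ≤ c := by
  rw [mul_comm, ← smul_eq_mul, ← Real.sSup_smul_of_nonneg (Real.sSup_nonneg ht)]
  refine Real.sSup_le ?_ hc
  rintro _ ⟨x, hx, rfl⟩
  dsimp only
  rw [smul_eq_mul, mul_comm, ← smul_eq_mul, ← Real.sSup_smul_of_nonneg (hs x hx)]
  refine Real.sSup_le ?_ hc
  rintro _ ⟨y, hy, rfl⟩
  exact h x hx y hy

namespace Matrix

lemma sum_kronecker_sum {m l ι κ R : Type*} [NonUnitalNonAssocSemiring R] (s : Finset ι)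
    (t : Finset κ) (A : ι → Matrix m m R) (B : κ → Matrix l l R) :
    (∑ i ∈ s, A i) ⊗ₖ (∑ j ∈ t, B j) = ∑ i ∈ s, ∑ j ∈ t, A i ⊗ₖ B j := by
  ext ⟨a, b⟩ ⟨c, d⟩
  simp only [kroneckerMap_apply, Matrix.sum_apply, Finset.sum_mul_sum]

lemma one_kronecker_kronecker {m l R : Type*} [DecidableEq m] [DecidableEq l] [MulZeroOneClass R]
    (A : Matrix m m R) (B : Matrix l l R) :
    (1 : Matrix (m × l) (m × l) R) ⊗ₖ (A ⊗ₖ B)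
      = ((1 ⊗ₖ A) ⊗ₖ (1 ⊗ₖ B)).submatrix (Equiv.prodProdProdComm m l m l)
          (Equiv.prodProdProdComm m l m l) := by
  ext ⟨⟨a, b⟩, c, d⟩ ⟨⟨a', b'⟩, c', d'⟩
  by_cases haa : a = a' <;> by_cases hbb : b = b' <;> simp [haa, hbb]

variable {m l : Type*} [Fintype m] [Fintype l]

lemma dotProduct_mulVec_eq_trace_mul_vecMulVec {R : Type*} [CommSemiring R]
    (X : Matrix m m R) (v w : m → R) : w ⬝ᵥ X *ᵥ v = (X * vecMulVec v w).trace := by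
  rw [mul_vecMulVec, trace_vecMulVec, dotProduct_comm]

lemma trace_submatrix_equiv {R : Type*} [AddCommMonoid R] (e : l ≃ m) (A : Matrix m m R) :
    (A.submatrix e e).trace = A.trace :=
  e.sum_comp fun i => A i i

lemma PosSemidef.trace_mul_nonneg {A B : Matrix m m ℂ} (hA : A.PosSemidef)
    (hB : B.PosSemidef) : 0 ≤ (A * B).trace := by
  classical
  open scoped MatrixOrder in
  obtain ⟨C, rfl⟩ := CStarAlgebra.nonneg_iff_eq_star_mul_self.mp hA.nonneg
  rw [star_eq_conjTranspose, Matrix.mul_assoc, trace_mul_comm]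
  exact (hB.mul_mul_conjTranspose_same C).trace_nonneg

lemma PosSemidef.trace_mul_le_of_smul_one_sub [DecidableEq m] {ρ M : Matrix m m ℂ}
    (hρ : ρ.PosSemidef) {c : ℝ} (hc : ((c : ℂ) • 1 - M).PosSemidef) :
    (ρ * M).trace ≤ c * ρ.trace := by
  have := hρ.trace_mul_nonneg hc
  rwa [Matrix.mul_sub, trace_sub, mul_smul_comm, mul_one, trace_smul, smul_eq_mul,
    sub_nonneg] at this

lemma IsHermitian.exists_posSemidef_smul_one_sub [DecidableEq m] {M : Matrix m m ℂ}
    (hM : M.IsHermitian) : ∃ c : ℝ, ((c : ℂ) • 1 - M).PosSemidef := by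
  open scoped Matrix.Norms.L2Operator MatrixOrder in
  have := IsSelfAdjoint.le_algebraMap_norm_self (A := Matrix m m ℂ) (a := M) hM
  exact ⟨‖M‖, by simpa [Matrix.le_iff, Algebra.algebraMap_eq_smul_one] using this⟩

lemma posSemidef_smul_one_sub_kronecker [DecidableEq m] [DecidableEq l] {A : Matrix m m ℂ}
    {B : Matrix l l ℂ} {r s : ℝ} (hr : 0 ≤ r) (hA : ((r : ℂ) • 1 - A).PosSemidef)
    (hB : B.PosSemidef) (hB' : ((s : ℂ) • 1 - B).PosSemidef) :
    (((r * s : ℝ) : ℂ) • 1 - A ⊗ₖ B).PosSemidef := by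
  have hsplit : ((r * s : ℝ) : ℂ) • 1 - A ⊗ₖ B
      = ((r : ℂ) • 1 - A) ⊗ₖ B + (r : ℂ) • ((1 : Matrix m m ℂ) ⊗ₖ ((s : ℂ) • 1 - B)) := by
    ext ⟨a, b⟩ ⟨c, d⟩
    by_cases hac : a = c <;> by_cases hbd : b = d <;> simp [hac, hbd] <;> ring
  rw [hsplit]
  exact (hA.kronecker hB).add ((PosSemidef.one.kronecker hB').smul (by exact_mod_cast hr))

end Matrix

section Expectation

variable {m l : Type*} [Fintype m] [Fintype l]

lemma IsDensity.submatrix_equiv {ρ : Matrix m m ℂ} (hρ : IsDensity ρ) (e : l ≃ m) :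
    IsDensity (ρ.submatrix e e) :=
  ⟨hρ.1.submatrix e, by rw [trace_submatrix_equiv, hρ.2]⟩

def expectationSet (M : Matrix m m ℂ) : Set ℝ :=
  {x : ℝ | ∃ ρ : Matrix m m ℂ, IsDensity ρ ∧ (ρ * M).trace = (x : ℂ)}

lemma expectationSet_submatrix_equiv (e : l ≃ m) (M : Matrix m m ℂ) :
    expectationSet (M.submatrix e e) = expectationSet M := by
  ext x
  constructor
  · rintro ⟨ρ, hρ, hx⟩
    refine ⟨ρ.submatrix e.symm e.symm, IsDensity.submatrix_equiv hρ e.symm, ?_⟩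
    rw [← hx, ← trace_submatrix_equiv e, ← submatrix_mul_equiv _ _ _ e]
    simp
  · rintro ⟨ρ, hρ, hx⟩
    refine ⟨ρ.submatrix e e, IsDensity.submatrix_equiv hρ e, ?_⟩
    rw [submatrix_mul_equiv, trace_submatrix_equiv, hx]

lemma nonneg_of_mem_expectationSet {M : Matrix m m ℂ} (hM : M.PosSemidef) {x : ℝ}
    (hx : x ∈ expectationSet M) : 0 ≤ x := by
  obtain ⟨ρ, hρ, hx⟩ := hx
  exact_mod_cast hx ▸ hρ.1.trace_mul_nonneg hM

lemma sSup_expectationSet_nonneg {M : Matrix m m ℂ} (hM : M.PosSemidef) :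
    0 ≤ sSup (expectationSet M) :=
  Real.sSup_nonneg fun _ => nonneg_of_mem_expectationSet hM

lemma mul_mem_expectationSet_kronecker {A : Matrix m m ℂ} {B : Matrix l l ℂ} {x y : ℝ}
    (hx : x ∈ expectationSet A) (hy : y ∈ expectationSet B) :
    x * y ∈ expectationSet (A ⊗ₖ B) := by
  obtain ⟨ρ, hρ, hx⟩ := hx
  obtain ⟨σ, hσ, hy⟩ := hy
  refine ⟨ρ ⊗ₖ σ, ⟨hρ.1.kronecker hσ.1, ?_⟩, ?_⟩
  · rw [trace_kronecker, hρ.2, hσ.2, mul_one]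
  · rw [← mul_kronecker_mul, trace_kronecker, hx, hy, Complex.ofReal_mul]

variable [DecidableEq m] [DecidableEq l]

lemma bddAbove_expectationSet {M : Matrix m m ℂ} (hM : M.IsHermitian) :
    BddAbove (expectationSet M) := by
  obtain ⟨c, hc⟩ := hM.exists_posSemidef_smul_one_sub
  refine ⟨c, fun x ⟨ρ, hρ, hx⟩ => ?_⟩
  have := hρ.1.trace_mul_le_of_smul_one_sub hc
  rw [hx, hρ.2, mul_one] at this
  exact_mod_cast this

lemma trace_mul_le_sSup_expectationSet_mul_trace {M ρ : Matrix m m ℂ} (hM : M.PosSemidef)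
    (hρ : ρ.PosSemidef) : (ρ * M).trace ≤ sSup (expectationSet M) * ρ.trace := by
  obtain ⟨t, ht0, ht⟩ : ∃ t : ℝ, 0 ≤ t ∧ (t : ℂ) = ρ.trace :=
    RCLike.nonneg_iff_exists_ofReal.mp hρ.trace_nonneg
  obtain ⟨x, -, hx⟩ : ∃ x : ℝ, 0 ≤ x ∧ (x : ℂ) = (ρ * M).trace :=
    RCLike.nonneg_iff_exists_ofReal.mp (hρ.trace_mul_nonneg hM)
  rcases ht0.eq_or_lt with rfl | htpos
  · rw [(hρ.trace_eq_zero_iff).mp (by simpa using ht.symm)]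
    simp
  · have hmem : x / t ∈ expectationSet M := by
      refine ⟨((t⁻¹ : ℝ) : ℂ) • ρ, ⟨hρ.smul (by positivity), ?_⟩, ?_⟩
      · rw [trace_smul, ← ht, smul_eq_mul, ← Complex.ofReal_mul, inv_mul_cancel₀ htpos.ne',
          Complex.ofReal_one]
      · rw [Matrix.smul_mul, trace_smul, ← hx, smul_eq_mul, ← Complex.ofReal_mul, inv_mul_eq_div]
    have := (div_le_iff₀ htpos).mp (le_csSup (bddAbove_expectationSet hM.1) hmem)
    rw [← hx, ← ht, ← Complex.ofReal_mul, Complex.real_le_real]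
    exact this

lemma posSemidef_sSup_expectationSet_smul_one_sub {M : Matrix m m ℂ} (hM : M.PosSemidef) :
    (((sSup (expectationSet M) : ℝ) : ℂ) • 1 - M).PosSemidef := by
  refine .of_dotProduct_mulVec_nonneg ?_ fun v => ?_
  · simp [IsHermitian, conjTranspose_sub, conjTranspose_smul, hM.1.eq]
  · have := trace_mul_le_sSup_expectationSet_mul_trace hM (posSemidef_vecMulVec_self_star v)
    rw [trace_mul_comm, ← dotProduct_mulVec_eq_trace_mul_vecMulVec, trace_vecMulVec,
      dotProduct_comm v] at this
    rwa [sub_mulVec, dotProduct_sub, smul_mulVec, one_mulVec, dotProduct_smul, smul_eq_mul,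
      sub_nonneg]

theorem sSup_expectationSet_kronecker {A : Matrix m m ℂ} {B : Matrix l l ℂ}
    (hA : A.PosSemidef) (hB : B.PosSemidef) :
    sSup (expectationSet (A ⊗ₖ B)) = sSup (expectationSet A) * sSup (expectationSet B) := by
  have hle : ∀ x ∈ expectationSet (A ⊗ₖ B),
      x ≤ sSup (expectationSet A) * sSup (expectationSet B) := by
    rintro x ⟨σ, hσ, hx⟩
    have := hσ.1.trace_mul_le_of_smul_one_sub <|
      posSemidef_smul_one_sub_kronecker (sSup_expectationSet_nonneg hA)
        (posSemidef_sSup_expectationSet_smul_one_sub hA) hB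
        (posSemidef_sSup_expectationSet_smul_one_sub hB)
    rw [hx, hσ.2, mul_one] at this
    exact_mod_cast this
  refine le_antisymm (Real.sSup_le hle ?_) ?_
  · exact mul_nonneg (sSup_expectationSet_nonneg hA) (sSup_expectationSet_nonneg hB)
  · exact Real.sSup_mul_sSup_le (fun _ => nonneg_of_mem_expectationSet hA)
      (fun _ => nonneg_of_mem_expectationSet hB)
      (sSup_expectationSet_nonneg (hA.kronecker hB))
      fun x hx y hy => le_csSup ⟨_, hle⟩ (mul_mem_expectationSet_kronecker hx hy)

end Expectation

section Channel

variable {n : Type*} [Fintype n] [DecidableEq n] {ι : Type*} [Fintype ι]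

noncomputable def fidObservable (K : ι → Matrix n n ℂ) : Matrix (n × n) (n × n) ℂ :=
  ∑ i, ((1 : Matrix n n ℂ) ⊗ₖ K i)ᴴ * vecMulVec (maxEnt n) (star (maxEnt n))
    * ((1 : Matrix n n ℂ) ⊗ₖ K i)

lemma fid_eq_trace_mul_fidObservable (K : ι → Matrix n n ℂ) (ρ : Matrix (n × n) (n × n) ℂ) :
    fid K ρ = (ρ * fidObservable K).trace := by
  rw [fid, dotProduct_mulVec_eq_trace_mul_vecMulVec, chanOut, fidObservable, Finset.sum_mul,
    Finset.mul_sum, trace_sum, trace_sum]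
  refine Finset.sum_congr rfl fun i _ => ?_
  rw [Matrix.mul_assoc, Matrix.mul_assoc, trace_mul_comm, ← Matrix.mul_assoc,
    ← Matrix.mul_assoc, ← Matrix.mul_assoc]

lemma posSemidef_fidObservable (K : ι → Matrix n n ℂ) : (fidObservable K).PosSemidef :=
  posSemidef_sum _ fun _ _ => (posSemidef_vecMulVec_self_star _).conjTranspose_mul_mul_same _

lemma fidSet_eq_expectationSet (K : ι → Matrix n n ℂ) :
    fidSet K = expectationSet (fidObservable K) := by
  ext x
  simp only [fidSet, expectationSet, fid_eq_trace_mul_fidObservable]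

end Channel

section Product

variable {m l : Type*} [Fintype m] [Fintype l] [DecidableEq m] [DecidableEq l]

lemma maxEnt_prod (p : (m × l) × (m × l)) :
    maxEnt (m × l) p
      = maxEnt m (Equiv.prodProdProdComm m l m l p).1
        * maxEnt l (Equiv.prodProdProdComm m l m l p).2 := by
  obtain ⟨⟨a, b⟩, c, d⟩ := p
  simp only [maxEnt, Equiv.prodProdProdComm_apply, Prod.ext_iff]
  by_cases hac : a = c <;> by_cases hbd : b = d <;> simp [hac, hbd]
  ring

lemma vecMulVec_maxEnt_prod :
    vecMulVec (maxEnt (m × l)) (star (maxEnt (m × l)))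
      = (vecMulVec (maxEnt m) (star (maxEnt m)) ⊗ₖ vecMulVec (maxEnt l) (star (maxEnt l))).submatrix
          (Equiv.prodProdProdComm m l m l) (Equiv.prodProdProdComm m l m l) := by
  ext p q
  simp only [vecMulVec_apply, Pi.star_apply, maxEnt_prod, submatrix_apply, kroneckerMap_apply,
    star_mul']
  ring

lemma fidObservable_kronecker {ι κ : Type*} [Fintype ι] [Fintype κ] (J : ι → Matrix m m ℂ)
    (K : κ → Matrix l l ℂ) :
    fidObservable (fun p : ι × κ => J p.1 ⊗ₖ K p.2)
      = (fidObservable J ⊗ₖ fidObservable K).submatrix (Equiv.prodProdProdComm m l m l)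
          (Equiv.prodProdProdComm m l m l) := by
  simp only [fidObservable, one_kronecker_kronecker, vecMulVec_maxEnt_prod,
    conjTranspose_submatrix, submatrix_mul_equiv, conjTranspose_kronecker, mul_kronecker_mul,
    sum_kronecker_sum, Fintype.sum_prod_type]
  ext p q
  simp only [submatrix_apply, Matrix.sum_apply]

end Product

theorem stmt_5 {d₁ d₂ : ℕ} {ι κ : Type*} [Fintype ι] [Fintype κ]
    (J : ι → Matrix (Fin d₁) (Fin d₁) ℂ) (K : κ → Matrix (Fin d₂) (Fin d₂) ℂ) :
    sSup (fidSet (fun p : ι × κ => J p.1 ⊗ₖ K p.2))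
      = sSup (fidSet J) * sSup (fidSet K) := by
  rw [fidSet_eq_expectationSet, fidSet_eq_expectationSet, fidSet_eq_expectationSet,
    fidObservable_kronecker, expectationSet_submatrix_equiv,
    sSup_expectationSet_kronecker (posSemidef_fidObservable J) (posSemidef_fidObservable K)]
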